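/- Fix s ∈ [0,T] and let R(·,s), R'(·,s) : [s,T] → ℝ^{d×d} be the resolvents of the two systems, i.e. differentiable matrix-valued functions with R(s,s) = R'(s,s) = I_d and (d/dt)R(t,s) = M(t)R(t,s), (d/dt)R'(t,s) = M'(t)R'(t,s) for all t ∈ [s,T]. Then for every t ∈ [s,T]: ‖R(t,s) − R'(t,s)‖ ≤ √d · T · e^{2 m̄ T} · sup_{t ∈ [0,T]} ‖M(t) − M'(t)‖. -/
import Mathlib


open Matrix Set intervalIntegral
open scoped Matrix

noncomputable section

/-- Frobenius norm of a real matrix. -/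
def frob {m n : Type*} [Fintype m] [Fintype n] (M : Matrix m n ℝ) : ℝ :=
  Real.sqrt (∑ i, ∑ j, (M i j) ^ 2)

section aux

variable {l m n : Type*} [Fintype l] [Fintype m] [Fintype n]

attribute [local instance] Matrix.frobeniusSeminormedAddCommGroup

lemma frob_eq_norm (A : Matrix m n ℝ) : frob A = ‖A‖ := by
  rw [Matrix.frobenius_norm_def, frob, Real.sqrt_eq_rpow]
  congr 1
  refine Finset.sum_congr rfl fun i _ => Finset.sum_congr rfl fun j _ => ?_
  rw [Real.norm_eq_abs, Real.rpow_two, sq_abs]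

lemma frob_nonneg (A : Matrix m n ℝ) : 0 ≤ frob A := Real.sqrt_nonneg _

lemma frob_sub_le (A B : Matrix m n ℝ) : frob (A - B) ≤ frob A + frob B := by
  simp only [frob_eq_norm]; exact norm_sub_le A B

lemma frob_add_le (A B : Matrix m n ℝ) : frob (A + B) ≤ frob A + frob B := by
  simp only [frob_eq_norm]; exact norm_add_le A B

lemma frob_mul_le (A : Matrix l m ℝ) (B : Matrix m n ℝ) :
    frob (A * B) ≤ frob A * frob B := by
  simp only [frob_eq_norm]; exact Matrix.frobenius_norm_mul A B

end aux

lemma frob_one (d : ℕ) : frob (1 : Matrix (Fin d) (Fin d) ℝ) = Real.sqrt d := by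
  unfold frob
  congr 1
  have h : ∀ i : Fin d, ∑ j, ((1 : Matrix (Fin d) (Fin d) ℝ) i j) ^ 2 = 1 := by
    intro i
    rw [Finset.sum_eq_single i]
    · simp [Matrix.one_apply]
    · intro b _ hb; simp [Matrix.one_apply, Ne.symm hb]
    · simp
  rw [Finset.sum_congr rfl fun i _ => h i]
  simp

lemma exp_bound_aux {y : ℝ} (hy : 0 ≤ y) : Real.exp y - 1 ≤ y * Real.exp y := by
  have h1 : (-y) + 1 ≤ Real.exp (-y) := Real.add_one_le_exp _
  have h2 : Real.exp (-y) * Real.exp y = 1 := by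
    rw [← Real.exp_add]; simp
  nlinarith [Real.exp_pos y]

lemma gronwallBound_le_of_nonneg {δ K ε x : ℝ} (hK : 0 ≤ K) (hε : 0 ≤ ε) (hx : 0 ≤ x) :
    gronwallBound δ K ε x ≤ (δ + ε * x) * Real.exp (K * x) := by
  rcases eq_or_ne K 0 with h | h
  · subst h; rw [gronwallBound_K0]; simp
  · have hKpos : 0 < K := lt_of_le_of_ne hK (Ne.symm h)
    rw [gronwallBound_of_K_ne_0 h]
    have key : Real.exp (K * x) - 1 ≤ (K * x) * Real.exp (K * x) :=
      exp_bound_aux (mul_nonneg hK hx)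
    have h2 : ε / K * (Real.exp (K * x) - 1) ≤ ε * x * Real.exp (K * x) := by
      rw [div_mul_eq_mul_div, div_le_iff₀ hKpos]
      calc ε * (Real.exp (K * x) - 1) ≤ ε * ((K * x) * Real.exp (K * x)) := by
            apply mul_le_mul_of_nonneg_left key hε
        _ = ε * x * Real.exp (K * x) * K := by ring
    calc δ * Real.exp (K * x) + ε / K * (Real.exp (K * x) - 1)
        ≤ δ * Real.exp (K * x) + ε * x * Real.exp (K * x) := by linarith
      _ = (δ + ε * x) * Real.exp (K * x) := by ring

/-- comparison of the resolvents of two linear systems: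
`‖R(t,s) − R'(t,s)‖ ≤ √d · T · e^{2m̄T} · sup_{t∈[0,T]} ‖M(t) − M'(t)‖`. -/
theorem statement18
    (d : ℕ) (hd : 1 ≤ d) (T : ℝ) (hT : 0 < T)
    (M M' : ℝ → Matrix (Fin d) (Fin d) ℝ)
    (hM : ∀ i j, ContinuousOn (fun t => M t i j) (Icc 0 T))
    (hM' : ∀ i j, ContinuousOn (fun t => M' t i j) (Icc 0 T))
    (mbar : ℝ) (hmbar : 0 ≤ mbar)
    (hMb : ∀ t ∈ Icc (0:ℝ) T, frob (M t) ≤ mbar)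
    (hM'b : ∀ t ∈ Icc (0:ℝ) T, frob (M' t) ≤ mbar)
    (s : ℝ) (hs : s ∈ Icc (0:ℝ) T)
    (R R' : ℝ → Matrix (Fin d) (Fin d) ℝ)
    (hRs : R s = 1) (hR's : R' s = 1)
    (hR : ∀ t ∈ Icc s T, ∀ i j,
      HasDerivAt (fun τ => R τ i j) ((M t * R t) i j) t)
    (hR' : ∀ t ∈ Icc s T, ∀ i j,
      HasDerivAt (fun τ => R' τ i j) ((M' t * R' t) i j) t) :
    ∀ t ∈ Icc s T,
      frob (R t - R' t) ≤
        Real.sqrt d * T * Real.exp (2 * mbar * T) *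
          (⨆ τ : Icc (0:ℝ) T, frob (M τ - M' τ)) := by
  -- The continuous linear equivalence from the plain pi type to the Euclidean space.
  set L : ((Fin d × Fin d) → ℝ) ≃L[ℝ] EuclideanSpace ℝ (Fin d × Fin d) :=
    (PiLp.continuousLinearEquiv 2 ℝ (fun _ : Fin d × Fin d => ℝ)).symm with hL
  -- embedding of matrices
  set e : Matrix (Fin d) (Fin d) ℝ → EuclideanSpace ℝ (Fin d × Fin d) :=
    fun A => L (fun p => A p.1 p.2) with he
  have norm_e : ∀ A, ‖e A‖ = frob A := by
    intro A
    rw [he]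
    rw [EuclideanSpace.norm_eq]
    unfold frob
    congr 1
    rw [Fintype.sum_prod_type]
    refine Finset.sum_congr rfl fun i _ => Finset.sum_congr rfl fun j _ => ?_
    rw [Real.norm_eq_abs, sq_abs]
    rfl
  have e_sub : ∀ A B, e (A - B) = e A - e B := by
    intro A B
    simp only [he]
    rw [← map_sub]
    rfl
  -- derivative transfer
  have deriv_e : ∀ (F DF : ℝ → Matrix (Fin d) (Fin d) ℝ) (t : ℝ),
      (∀ i j, HasDerivAt (fun τ => F τ i j) (DF t i j) t) →
      HasDerivAt (fun τ => e (F τ)) (e (DF t)) t := by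
    intro F DF t h
    have hpi : HasDerivAt (fun τ => (fun p : Fin d × Fin d => F τ p.1 p.2))
        (fun p : Fin d × Fin d => DF t p.1 p.2) t :=
      hasDerivAt_pi.2 fun p => h p.1 p.2
    exact (L.toContinuousLinearMap.hasFDerivAt).comp_hasDerivAt t hpi
  -- the sup
  set ε : ℝ := ⨆ τ : Icc (0:ℝ) T, frob (M τ - M' τ) with hε
  have hbdd : BddAbove (range fun τ : Icc (0:ℝ) T => frob (M τ - M' τ)) := by
    refine ⟨2 * mbar, ?_⟩
    rintro x ⟨τ, rfl⟩
    calc frob (M τ - M' τ) ≤ frob (M τ) + frob (M' τ) := frob_sub_le _ _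
      _ ≤ 2 * mbar := by
          have := hMb τ τ.2; have := hM'b τ τ.2; linarith
  have hεle : ∀ τ ∈ Icc (0:ℝ) T, frob (M τ - M' τ) ≤ ε :=
    fun τ hτ => le_ciSup hbdd (⟨τ, hτ⟩ : Icc (0:ℝ) T)
  have hεnn : 0 ≤ ε := le_trans (frob_nonneg _) (hεle s hs)
  obtain ⟨hs0, hsT⟩ := hs
  -- subset fact
  have hsub : Icc s T ⊆ Icc (0:ℝ) T := Icc_subset_Icc hs0 le_rfl
  -- Step 1 : bound on ‖R' t‖ via Gronwall.
  have hcontR' : ContinuousOn (fun t => e (R' t)) (Icc s T) := by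
    intro t ht
    exact ((deriv_e R' (fun t => M' t * R' t) t (hR' t ht)).continuousAt).continuousWithinAt
  have hR'bound : ∀ t ∈ Icc s T, frob (R' t) ≤ Real.sqrt d * Real.exp (mbar * T) := by
    have := norm_le_gronwallBound_of_norm_deriv_right_le (f := fun t => e (R' t))
      (f' := fun t => e (M' t * R' t)) (δ := Real.sqrt d) (K := mbar) (ε := 0)
      (a := s) (b := T) hcontR'
      (fun x hx => (deriv_e R' (fun t => M' t * R' t) x
        (hR' x (Ico_subset_Icc_self hx))).hasDerivWithinAt)
      (by rw [norm_e, hR's, frob_one])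
      (fun x hx => by
        rw [norm_e, norm_e, add_zero]
        calc frob (M' x * R' x) ≤ frob (M' x) * frob (R' x) := frob_mul_le _ _
          _ ≤ mbar * frob (R' x) := by
              apply mul_le_mul_of_nonneg_right (hM'b x (hsub (Ico_subset_Icc_self hx)))
                (frob_nonneg _))
    intro t ht
    have h1 := this t ht
    rw [norm_e, gronwallBound_ε0] at h1
    refine h1.trans ?_
    apply mul_le_mul_of_nonneg_left _ (Real.sqrt_nonneg _)
    apply Real.exp_le_exp.2
    have : t - s ≤ T := by linarith [ht.1, ht.2]
    nlinarith [ht.1, ht.2, hs0]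
  -- Step 2 : Gronwall for the difference.
  set Δ : ℝ → Matrix (Fin d) (Fin d) ℝ := fun t => R t - R' t with hΔ
  set DΔ : ℝ → Matrix (Fin d) (Fin d) ℝ := fun t => M t * R t - M' t * R' t with hDΔ
  have hderivΔ : ∀ t ∈ Icc s T, HasDerivAt (fun τ => e (Δ τ)) (e (DΔ t)) t := by
    intro t ht
    apply deriv_e
    intro i j
    have h1 := hR t ht i j
    have h2 := hR' t ht i j
    have : HasDerivAt (fun τ => R τ i j - R' τ i j)
        ((M t * R t) i j - (M' t * R' t) i j) t := h1.sub h2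
    convert this using 1 <;> rfl
  have hcontΔ : ContinuousOn (fun t => e (Δ t)) (Icc s T) := fun t ht =>
    ((hderivΔ t ht).continuousAt).continuousWithinAt
  have key := norm_le_gronwallBound_of_norm_deriv_right_le (f := fun t => e (Δ t))
    (f' := fun t => e (DΔ t)) (δ := 0) (K := mbar)
    (ε := ε * (Real.sqrt d * Real.exp (mbar * T)))
    (a := s) (b := T) hcontΔ
    (fun x hx => (hderivΔ x (Ico_subset_Icc_self hx)).hasDerivWithinAt)
    (by simp [norm_e, hΔ, hRs, hR's, frob]) ?_
  · intro t ht
    have h1 := key t ht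
    rw [norm_e] at h1
    refine h1.trans ?_
    have h2 : gronwallBound 0 mbar (ε * (Real.sqrt d * Real.exp (mbar * T))) (t - s)
        ≤ (0 + ε * (Real.sqrt d * Real.exp (mbar * T)) * (t - s)) * Real.exp (mbar * (t - s)) :=
      gronwallBound_le_of_nonneg hmbar
        (mul_nonneg hεnn (mul_nonneg (Real.sqrt_nonneg _) (Real.exp_pos _).le))
        (by linarith [ht.1])
    refine h2.trans ?_
    rw [zero_add]
    have hts : t - s ≤ T := by linarith [ht.1, ht.2]
    have htsnn : 0 ≤ t - s := by linarith [ht.1]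
    have hexp1 : Real.exp (mbar * (t - s)) ≤ Real.exp (mbar * T) :=
      Real.exp_le_exp.2 (mul_le_mul_of_nonneg_left hts hmbar)
    have hexp2 : (0:ℝ) < Real.exp (mbar * T) := Real.exp_pos _
    calc ε * (Real.sqrt d * Real.exp (mbar * T)) * (t - s) * Real.exp (mbar * (t - s))
        ≤ ε * (Real.sqrt d * Real.exp (mbar * T)) * T * Real.exp (mbar * T) := by
          apply mul_le_mul
          · apply mul_le_mul_of_nonneg_left hts
            exact mul_nonneg hεnn (mul_nonneg (Real.sqrt_nonneg _) hexp2.le)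
          · exact hexp1
          · exact (Real.exp_pos _).le
          · exact mul_nonneg (mul_nonneg hεnn
              (mul_nonneg (Real.sqrt_nonneg _) hexp2.le)) (le_trans htsnn hts)
      _ = Real.sqrt d * T * (Real.exp (mbar * T) * Real.exp (mbar * T)) * ε := by ring
      _ = Real.sqrt d * T * Real.exp (2 * mbar * T) * ε := by
          rw [← Real.exp_add]; ring_nf
  · intro x hx
    have hxIcc := Ico_subset_Icc_self hx
    rw [norm_e, norm_e]
    have hsplit : DΔ x = M x * Δ x + (M x - M' x) * R' x := by
      simp only [hDΔ, hΔ]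
      rw [Matrix.mul_sub, Matrix.sub_mul]
      abel
    rw [hsplit]
    calc frob (M x * Δ x + (M x - M' x) * R' x)
        ≤ frob (M x * Δ x) + frob ((M x - M' x) * R' x) := frob_add_le _ _
      _ ≤ frob (M x) * frob (Δ x) + frob (M x - M' x) * frob (R' x) := by
          gcongr <;> [exact frob_mul_le _ _; exact frob_mul_le _ _]
      _ ≤ mbar * frob (Δ x) + ε * (Real.sqrt d * Real.exp (mbar * T)) := by
          have h1 : frob (M x) * frob (Δ x) ≤ mbar * frob (Δ x) :=
            mul_le_mul_of_nonneg_right (hMb x (hsub hxIcc)) (frob_nonneg _)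
          have h2 : frob (M x - M' x) * frob (R' x) ≤ ε * (Real.sqrt d * Real.exp (mbar * T)) :=
            mul_le_mul (hεle x (hsub hxIcc)) (hR'bound x hxIcc) (frob_nonneg _) hεnn
          linarith
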